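/- arXiv:2107.11977 — 4 statements merged into one kernel-verified Lean document; each statement's English description precedes it below -/
import Mathlib

section
/- For every γ ≥ 1 and β ∈ (0,1], max{ (β(γ²+1))/(γ+1) − 1, (1−β)(γ−1) } ≥ (γ−1)²/(2γ). -/
/-- For every γ ≥ 1 and β ∈ (0,1],
max{ (β(γ²+1))/(γ+1) − 1, (1−β)(γ−1) } ≥ (γ−1)²/(2γ). -/
theorem stmt_0 (γ β : ℝ) (hγ : 1 ≤ γ) (hβ0 : 0 < β) (hβ1 : β ≤ 1) :
    (γ - 1) ^ 2 / (2 * γ) ≤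
      max ((β * (γ ^ 2 + 1)) / (γ + 1) - 1) ((1 - β) * (γ - 1)) := by
  have hγ0 : (0:ℝ) < γ := by linarith
  have h2γ : (0:ℝ) < 2 * γ := by linarith
  have hγ1 : (0:ℝ) < γ + 1 := by linarith
  rcases le_or_gt β ((γ + 1) / (2 * γ)) with h | h
  · refine le_max_of_le_right ?_
    rw [div_le_iff₀ h2γ]
    rw [le_div_iff₀ h2γ] at h
    nlinarith
  · refine le_max_of_le_left ?_
    rw [le_sub_iff_add_le, div_add' _ _ _ (ne_of_gt h2γ),
      div_le_div_iff₀ h2γ hγ1]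
    rw [div_lt_iff₀ h2γ] at h
    nlinarith
end

section
/- Let C_i and C_{i+1} be two consecutive clusters on the real line (all points of C_i strictly left of all points of C_{i+1}) with centers c_i ∈ C_i, c_{i+1} ∈ C_{i+1} satisfying γ-center proximity for some γ > 1. If x_{i,l} is the leftmost point of C_i and x_{i+1,l} the leftmost point of C_{i+1}, and x_{i,l} < c_i < x_{i+1,l}, then d(x_{i,l}, x_{i+1,l}) > ((γ² + 1)/(γ + 1))·d(x_{i,l}, c_i). -/
/-- Tighter center-proximity bound for the leftmost points of two consecutive
clusters: if x_{i,l} < c_i < x_{i+1,l} and the γ-center-proximity inequalities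
hold, then d(x_{i,l}, x_{i+1,l}) > ((γ²+1)/(γ+1))·d(x_{i,l}, c_i). -/
theorem stmt_8 (γ xil ci xjl cj : ℝ) (hγ : 1 < γ)
    (horder : xil < ci ∧ ci < xjl)
    (hprox1 : |xil - cj| > γ * |xil - ci|)
    (hprox2 : |xjl - cj| < |xjl - ci| / γ) :
    |xil - xjl| > ((γ ^ 2 + 1) / (γ + 1)) * |xil - ci| := by
  obtain ⟨h1, h2⟩ := horder
  have hγ0 : (0:ℝ) < γ := by linarith
  have e1 : |xil - ci| = ci - xil := by rw [abs_sub_comm, abs_of_pos]; linarith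
  have e2 : |xjl - ci| = xjl - ci := by rw [abs_of_pos]; linarith
  have e3 : |xil - xjl| = xjl - xil := by rw [abs_sub_comm, abs_of_pos]; linarith
  have tri : |xil - cj| ≤ |xil - xjl| + |xjl - cj| := abs_sub_le _ _ _
  have key : γ * (ci - xil) < (xjl - xil) + (xjl - ci) / γ := by
    rw [e1] at hprox1; rw [e2] at hprox2; rw [e3] at tri; linarith
  have key2 : γ * (γ * (ci - xil)) < γ * (xjl - xil) + (xjl - ci) := by
    have := mul_lt_mul_of_pos_left key hγ0
    field_simp at this
    nlinarith
  rw [e1, e3, div_mul_eq_mul_div, gt_iff_lt, div_lt_iff₀ (by linarith)]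
  nlinarith
end

section
/- Let x₁ ≤ … ≤ xₙ be reals and let m(x) denote the left median (the ⌈n/2⌉-th smallest value). For any agent i and any misreport y ∈ ℝ, |x_i − m(x_{−i}, y)| ≥ |x_i − m(x)|; i.e., the median mechanism for 1-Facility Location on the line is strategyproof. -/
/-- The left median of a finite multiset of reals: the ⌈card/2⌉-th smallest
element (index (card−1)/2 of the sorted list). -/
noncomputable def leftMedian (s : Multiset ℝ) : ℝ :=
  (Multiset.sort s (· ≤ ·)).getD ((Multiset.card s - 1) / 2) 0

/-- The multiset of locations of an instance. -/
def locations {n : ℕ} (x : Fin n → ℝ) : Multiset ℝ :=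
  Multiset.map x Finset.univ.val

section aux

lemma aux_mono (L : List ℝ) (hL : L.Pairwise (· ≤ ·)) {j k : ℕ} (hj : j ≤ k)
    (hk : k < L.length) : L[j]'(by omega) ≤ L[k] := by
  have := hL.rel_get_of_le (a := ⟨j, by omega⟩) (b := ⟨k, hk⟩) (by exact hj)
  simpa using this

lemma aux_ge (L : List ℝ) (hL : L.Pairwise (· ≤ ·)) (k : ℕ) (hk : k < L.length)
    (m : ℝ) (h : L.countP (fun e => decide (e < m)) ≤ k) : m ≤ L[k] := by
  by_contra hcon
  push_neg at hcon
  have hlen : (L.take (k+1)).length = k + 1 := by rw [List.length_take]; omega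
  have hall : ∀ a ∈ L.take (k+1), (fun e => decide (e < m)) a = true := by
    intro a ha
    rw [List.mem_take_iff_getElem] at ha
    obtain ⟨j, hj, rfl⟩ := ha
    have : L[j] ≤ L[k] := aux_mono L hL (by omega) hk
    simp only [decide_eq_true_eq]
    exact lt_of_le_of_lt this hcon
  have h1 : (L.take (k+1)).countP (fun e => decide (e < m)) = k + 1 := by
    rw [List.countP_eq_length.mpr hall, hlen]
  have h2 : (L.take (k+1)).countP (fun e => decide (e < m)) ≤
      L.countP (fun e => decide (e < m)) := (List.take_sublist _ _).countP_le
  omega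

lemma aux_le (L : List ℝ) (hL : L.Pairwise (· ≤ ·)) (k : ℕ) (hk : k < L.length)
    (m : ℝ) (h : k + 1 ≤ L.countP (fun e => decide (e ≤ m))) : L[k] ≤ m := by
  by_contra hcon
  push_neg at hcon
  have hsplit : L.countP (fun e => decide (e ≤ m)) =
      (L.take k).countP (fun e => decide (e ≤ m)) +
      (L.drop k).countP (fun e => decide (e ≤ m)) := by
    conv_lhs => rw [← List.take_append_drop k L]
    rw [List.countP_append]
  have hdrop : (L.drop k).countP (fun e => decide (e ≤ m)) = 0 := by
    rw [List.countP_eq_zero]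
    intro a ha
    rw [List.mem_drop_iff_getElem] at ha
    obtain ⟨j, hj, rfl⟩ := ha
    have : L[k] ≤ L[k + j]'(by omega) := aux_mono L hL (by omega) (by omega)
    simp only [decide_eq_true_eq, not_le]
    exact lt_of_lt_of_le hcon this
  have htake : (L.take k).countP (fun e => decide (e ≤ m)) ≤ k := by
    calc (L.take k).countP (fun e => decide (e ≤ m)) ≤ (L.take k).length :=
          List.countP_le_length
      _ ≤ k := by rw [List.length_take]; omega
  omega

lemma aux_countP_lt (L : List ℝ) (hL : L.Pairwise (· ≤ ·)) (k : ℕ) (hk : k < L.length)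
    (m : ℝ) (hm : m ≤ L[k]) : L.countP (fun e => decide (e < m)) ≤ k := by
  have hsplit : L.countP (fun e => decide (e < m)) =
      (L.take k).countP (fun e => decide (e < m)) +
      (L.drop k).countP (fun e => decide (e < m)) := by
    conv_lhs => rw [← List.take_append_drop k L]
    rw [List.countP_append]
  have hdrop : (L.drop k).countP (fun e => decide (e < m)) = 0 := by
    rw [List.countP_eq_zero]
    intro a ha
    rw [List.mem_drop_iff_getElem] at ha
    obtain ⟨j, hj, rfl⟩ := ha
    have : L[k] ≤ L[k + j]'(by omega) := aux_mono L hL (by omega) (by omega)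
    simp only [decide_eq_true_eq, not_lt]
    linarith
  have htake : (L.take k).countP (fun e => decide (e < m)) ≤ k := by
    calc (L.take k).countP (fun e => decide (e < m)) ≤ (L.take k).length :=
          List.countP_le_length
      _ ≤ k := by rw [List.length_take]; omega
  omega

lemma aux_countP_le (L : List ℝ) (hL : L.Pairwise (· ≤ ·)) (k : ℕ) (hk : k < L.length) :
    k + 1 ≤ L.countP (fun e => decide (e ≤ L[k])) := by
  have hlen : (L.take (k+1)).length = k + 1 := by rw [List.length_take]; omega
  have hall : ∀ a ∈ L.take (k+1), (fun e => decide (e ≤ L[k])) a = true := by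
    intro a ha
    rw [List.mem_take_iff_getElem] at ha
    obtain ⟨j, hj, rfl⟩ := ha
    simp only [decide_eq_true_eq]
    exact aux_mono L hL (by omega) hk
  have h1 : (L.take (k+1)).countP (fun e => decide (e ≤ L[k])) = k + 1 := by
    rw [List.countP_eq_length.mpr hall, hlen]
  have h2 := (List.take_sublist (k+1) L).countP_le (p := fun e => decide (e ≤ L[k]))
  omega

-- countP of sort equals countP of multiset
lemma countP_sort (s : Multiset ℝ) (p : ℝ → Prop) [DecidablePred p] :
    (Multiset.sort s (· ≤ ·)).countP (fun e => decide (p e)) = s.countP p := by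
  rw [← Multiset.coe_countP, Multiset.sort_eq]

-- the key lemma
lemma key (t : Multiset ℝ) (a b : ℝ) :
    |a - leftMedian (a ::ₘ t)| ≤ |a - leftMedian (b ::ₘ t)| := by
  set N := Multiset.card t with hN
  set k := N / 2 with hk
  set L := Multiset.sort (a ::ₘ t) (· ≤ ·) with hLdef
  set L' := Multiset.sort (b ::ₘ t) (· ≤ ·) with hL'def
  have hLlen : L.length = N + 1 := by
    rw [hLdef, Multiset.length_sort]; simp [hN]
  have hL'len : L'.length = N + 1 := by
    rw [hL'def, Multiset.length_sort]; simp [hN]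
  have hkL : k < L.length := by omega
  have hkL' : k < L'.length := by omega
  have hLs : L.Pairwise (· ≤ ·) := Multiset.pairwise_sort _ _
  have hL's : L'.Pairwise (· ≤ ·) := Multiset.pairwise_sort _ _
  have hm : leftMedian (a ::ₘ t) = L[k] := by
    have hcard : Multiset.card (a ::ₘ t) = N + 1 := by rw [Multiset.card_cons]
    have hidx : (N + 1 - 1) / 2 = k := by omega
    rw [leftMedian, hcard, hidx, ← hLdef, List.getD_eq_getElem _ _ hkL]
  have hm' : leftMedian (b ::ₘ t) = L'[k] := by
    have hcard : Multiset.card (b ::ₘ t) = N + 1 := by rw [Multiset.card_cons]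
    have hidx : (N + 1 - 1) / 2 = k := by omega
    rw [leftMedian, hcard, hidx, ← hL'def, List.getD_eq_getElem _ _ hkL']
  rw [hm, hm']
  set m := L[k] with hmdef
  rcases lt_trichotomy a m with hlt | heq | hgt
  · -- a < m : show m ≤ L'[k]
    have h1 : (a ::ₘ t).countP (fun e => e < m) ≤ k := by
      rw [← countP_sort]; exact aux_countP_lt L hLs k hkL m le_rfl
    have h2 : t.countP (fun e => e < m) + 1 ≤ k := by
      rw [Multiset.countP_cons] at h1
      simp only [hlt, if_pos] at h1; omega
    have h3 : (b ::ₘ t).countP (fun e => e < m) ≤ k := by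
      rw [Multiset.countP_cons]
      split <;> omega
    have h4 : m ≤ L'[k] := by
      apply aux_ge L' hL's k hkL'
      rw [countP_sort]; exact h3
    rw [abs_of_nonpos (by linarith), abs_of_nonpos (by linarith)]
    linarith
  · simp [← heq]
  · -- a > m : show L'[k] ≤ m
    have h1 : k + 1 ≤ (a ::ₘ t).countP (fun e => e ≤ m) := by
      rw [← countP_sort]; exact aux_countP_le L hLs k hkL
    have h2 : k + 1 ≤ t.countP (fun e => e ≤ m) := by
      rw [Multiset.countP_cons] at h1
      have : ¬ a ≤ m := not_le.mpr hgt
      simp only [this, if_neg, not_false_iff] at h1; omega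
    have h3 : k + 1 ≤ (b ::ₘ t).countP (fun e => e ≤ m) := by
      rw [Multiset.countP_cons]; split <;> omega
    have h4 : L'[k] ≤ m := by
      apply aux_le L' hL's k hkL'
      rw [countP_sort]; exact h3
    rw [abs_of_nonneg (by linarith), abs_of_nonneg (by linarith)]
    linarith

end aux

/-- The median mechanism for 1-Facility Location on the line is strategyproof:
no agent can decrease her distance to the (left) median by misreporting. -/
theorem stmt_13 (n : ℕ) (x : Fin n → ℝ) (i : Fin n) (y : ℝ) :
    |x i - leftMedian (locations x)| ≤
      |x i - leftMedian (locations (Function.update x i y))| := by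
  have hmem : i ∈ Finset.univ.val := Finset.mem_univ_val i
  set t : Multiset ℝ := Multiset.map x (Finset.univ.val.erase i) with ht
  have hx : locations x = x i ::ₘ t := by
    rw [locations, ← Multiset.cons_erase hmem, Multiset.map_cons]
  have hy : locations (Function.update x i y) = y ::ₘ t := by
    rw [locations, ← Multiset.cons_erase hmem, Multiset.map_cons,
      Function.update_self]
    congr 1
    apply Multiset.map_congr rfl
    intro j hj
    have hji : j ≠ i := by
      intro h; subst h
      exact Multiset.Nodup.notMem_erase (Finset.univ.nodup) hj
    exact Function.update_of_ne hji y x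
  rw [hx, hy]
  exact key t (x i) y
end

section
/- Let ρ ≥ 1 and let x = (x_1, …, x_{k+1}) with x_1 < … < x_{k+1} be a well-separated instance: ρ·d(x_{k+1}, x_k) < min_{2 ≤ i ≤ k} d(x_{i−1}, x_i). Then the optimal social cost of x equals d(x_k, x_{k+1}), and any k-facility placement with cost ≤ ρ·d(x_k, x_{k+1}) assigns x_k and x_{k+1} to the same facility and each x_i (i ≤ k−1) to a distinct facility within distance ρ·d(x_k, x_{k+1}) of x_i. -/
/-- The distance from agent `x i` to the nearest of the k facilities
`c 1, …, c k`. -/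
noncomputable def nearestDist (k : ℕ) (x c : ℕ → ℝ) (i : ℕ) : ℝ :=
  sInf {d : ℝ | ∃ j, 1 ≤ j ∧ j ≤ k ∧ d = |x i - c j|}

/-- The social cost of the placement `c` on the well-separated instance with
agents `x 1, …, x (k+1)`. -/
noncomputable def socialCost (k : ℕ) (x c : ℕ → ℝ) : ℝ :=
  ∑ i ∈ Finset.Icc 1 (k + 1), nearestDist k x c i

lemma nd_spec (k : ℕ) (hk : 1 ≤ k) (x c : ℕ → ℝ) (i : ℕ) :
    (∃ j, 1 ≤ j ∧ j ≤ k ∧ nearestDist k x c i = |x i - c j|) ∧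
    (∀ j, 1 ≤ j → j ≤ k → nearestDist k x c i ≤ |x i - c j|) := by
  have hset : {d : ℝ | ∃ j, 1 ≤ j ∧ j ≤ k ∧ d = |x i - c j|} =
      ↑((Finset.Icc 1 k).image (fun j => |x i - c j|)) := by
    ext d
    simp only [Finset.coe_image, Finset.coe_Icc, Set.mem_image, Set.mem_Icc, Set.mem_setOf_eq]
    constructor
    · rintro ⟨j, h1, h2, rfl⟩; exact ⟨j, ⟨h1, h2⟩, rfl⟩
    · rintro ⟨j, ⟨h1, h2⟩, rfl⟩; exact ⟨j, h1, h2, rfl⟩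
  have hne : ((Finset.Icc 1 k).image (fun j => |x i - c j|)).Nonempty :=
    Finset.image_nonempty.mpr ⟨1, Finset.mem_Icc.mpr ⟨le_refl 1, hk⟩⟩
  have heq : nearestDist k x c i = ((Finset.Icc 1 k).image (fun j => |x i - c j|)).min' hne := by
    rw [nearestDist, hset]; exact hne.csInf_eq_min'
  constructor
  · have hm := Finset.min'_mem _ hne
    rw [Finset.mem_image] at hm
    obtain ⟨j, hj, hjeq⟩ := hm
    rw [Finset.mem_Icc] at hj
    exact ⟨j, hj.1, hj.2, by rw [heq, ← hjeq]⟩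
  · intro j h1 h2
    rw [heq]
    exact Finset.min'_le _ _ (Finset.mem_image_of_mem _ (Finset.mem_Icc.mpr ⟨h1, h2⟩))

lemma strict_mono_lem (k : ℕ) (x : ℕ → ℝ) (hmono : ∀ i, 1 ≤ i → i ≤ k → x i < x (i + 1)) :
    ∀ a b, 1 ≤ a → a < b → b ≤ k + 1 → x a < x b := by
  intro a b ha hab hb
  induction b with
  | zero => omega
  | succ n ih =>
    rcases Nat.lt_or_ge a n with h | h
    · exact lt_trans (ih (by omega) (by omega)) (hmono n (by omega) (by omega))
    · have : a = n := by omega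
      subst this
      exact hmono a ha (by omega)

/-- For a well-separated instance x_1 < … < x_{k+1} with
ρ·d(x_k, x_{k+1}) < min_{2≤i≤k} d(x_{i−1}, x_i): the optimal social cost is
d(x_k, x_{k+1}), and any k-facility placement with cost ≤ ρ·d(x_k, x_{k+1})
serves x_k and x_{k+1} by a common nearest facility, and serves each of
x_1, …, x_{k−1} by a distinct facility within distance ρ·d(x_k, x_{k+1}). -/
theorem stmt_19 (k : ℕ) (hk : 2 ≤ k) (ρ : ℝ) (hρ : 1 ≤ ρ) (x : ℕ → ℝ)
    (hmono : ∀ i, 1 ≤ i → i ≤ k → x i < x (i + 1))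
    (hsep : ∀ i, 2 ≤ i → i ≤ k → ρ * (x (k + 1) - x k) < x i - x (i - 1)) :
    (∀ c : ℕ → ℝ, x (k + 1) - x k ≤ socialCost k x c) ∧
    (∃ c : ℕ → ℝ, socialCost k x c = x (k + 1) - x k) ∧
    (∀ c : ℕ → ℝ, socialCost k x c ≤ ρ * (x (k + 1) - x k) →
      (∃ j, 1 ≤ j ∧ j ≤ k ∧
        |x k - c j| = nearestDist k x c k ∧
        |x (k + 1) - c j| = nearestDist k x c (k + 1)) ∧
      (∃ f : ℕ → ℕ, Set.InjOn f (Set.Icc 1 (k - 1)) ∧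
        ∀ i, 1 ≤ i → i ≤ k - 1 →
          1 ≤ f i ∧ f i ≤ k ∧
          |x i - c (f i)| ≤ ρ * (x (k + 1) - x k))) := by
  have hk1 : 1 ≤ k := by omega
  have hd : 0 < x (k + 1) - x k := by
    have := hmono k (by omega) (le_refl k); linarith
  have hxmono := strict_mono_lem k x hmono
  -- strict gap lemma
  have hgap : ∀ i i', 1 ≤ i → i + 1 ≤ k → i < i' → i' ≤ k + 1 →
      ρ * (x (k + 1) - x k) < x i' - x i := by
    intro i i' h1 h2 h3 h4
    have hs : ρ * (x (k + 1) - x k) < x (i + 1) - x i := by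
      have := hsep (i + 1) (by omega) (by omega)
      simpa using this
    rcases eq_or_lt_of_le (Nat.succ_le_of_lt h3) with h | h
    · rw [← h]; exact hs
    · have := hxmono (i + 1) i' (by omega) h h4
      linarith
  -- weak gap lemma
  have hgap2 : ∀ i i', 1 ≤ i → i < i' → i' ≤ k + 1 →
      x (k + 1) - x k ≤ x i' - x i := by
    intro i i' h1 h2 h3
    rcases Nat.lt_or_ge (i + 1) (k + 1) with h | h
    · have := hgap i i' h1 (by omega) h2 h3
      nlinarith
    · have hi : i = k := by omega
      have hi' : i' = k + 1 := by omega
      subst hi; subst hi'; exact le_rfl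
  -- nonnegativity and pair bounds for an arbitrary placement
  have key : ∀ c : ℕ → ℝ,
      ∃ g : ℕ → ℕ, (∀ i, 1 ≤ g i ∧ g i ≤ k ∧ nearestDist k x c i = |x i - c (g i)|) ∧
        (∀ i, 0 ≤ nearestDist k x c i) ∧
        (∀ i i', i ∈ Finset.Icc 1 (k+1) → i' ∈ Finset.Icc 1 (k+1) → i ≠ i' →
          nearestDist k x c i + nearestDist k x c i' ≤ socialCost k x c) ∧
        (∀ i, i ∈ Finset.Icc 1 (k+1) → nearestDist k x c i ≤ socialCost k x c) := by
    intro c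
    choose g hg1 hg2 hg3 using fun i => (nd_spec k hk1 x c i).1
    have hnn : ∀ i, 0 ≤ nearestDist k x c i := fun i => (hg3 i) ▸ abs_nonneg _
    refine ⟨g, fun i => ⟨hg1 i, hg2 i, hg3 i⟩, hnn, ?_, ?_⟩
    · intro i i' hi hi' hne
      have hsub : ({i, i'} : Finset ℕ) ⊆ Finset.Icc 1 (k + 1) := by
        intro t ht
        simp only [Finset.mem_insert, Finset.mem_singleton] at ht
        rcases ht with rfl | rfl <;> assumption
      have := Finset.sum_le_sum_of_subset_of_nonneg hsub
        (fun t _ _ => hnn t)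
      rw [Finset.sum_pair hne] at this
      exact this
    · intro i hi
      exact Finset.single_le_sum (fun t _ => hnn t) hi
  refine ⟨?_, ?_, ?_⟩
  · -- lower bound
    intro c
    obtain ⟨g, hg, hnn, hpair, _⟩ := key c
    have hcard : (Finset.Icc 1 k).card < (Finset.Icc 1 (k + 1)).card := by
      simp [Nat.card_Icc]
    obtain ⟨i, hi, i', hi', hne, heq⟩ :=
      Finset.exists_ne_map_eq_of_card_lt_of_maps_to hcard
        (fun i _ => Finset.mem_Icc.mpr ⟨(hg i).1, (hg i).2.1⟩)
    rw [Finset.mem_Icc] at hi hi'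
    -- wlog i < i'
    have main : ∀ a b, 1 ≤ a → a < b → b ≤ k + 1 → g a = g b →
        x (k + 1) - x k ≤ socialCost k x c := by
      intro a b h1 h2 h3 hgab
      have hp := hpair a b (Finset.mem_Icc.mpr ⟨h1, by omega⟩)
        (Finset.mem_Icc.mpr ⟨by omega, h3⟩) (by omega)
      have ha := (hg a).2.2
      have hb := (hg b).2.2
      rw [hgab] at ha
      have e1 : x (g b).succ = x (g b).succ := rfl
      have l1 : c (g b) - x a ≤ |x a - c (g b)| := by
        rw [abs_sub_comm]; exact le_abs_self _
      have l2 : x b - c (g b) ≤ |x b - c (g b)| := le_abs_self _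
      have := hgap2 a b h1 h2 h3
      linarith
    rcases lt_or_gt_of_ne hne with h | h
    · exact main i i' hi.1 h hi'.2 heq
    · exact main i' i hi'.1 h hi.2 heq.symm
  · -- optimal placement: c = x
    refine ⟨x, ?_⟩
    have hzero : ∀ i ∈ Finset.Icc 1 k, nearestDist k x x i = 0 := by
      intro i hi
      rw [Finset.mem_Icc] at hi
      have h1 := (nd_spec k hk1 x x i).2 i hi.1 hi.2
      simp only [sub_self, abs_zero] at h1
      obtain ⟨j, _, _, hj⟩ := (nd_spec k hk1 x x i).1
      have : 0 ≤ nearestDist k x x i := hj ▸ abs_nonneg _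
      linarith
    have hlast : nearestDist k x x (k + 1) = x (k + 1) - x k := by
      have h1 := (nd_spec k hk1 x x (k + 1)).2 k hk1 (le_refl k)
      have habs : |x (k + 1) - x k| = x (k + 1) - x k := abs_of_pos hd
      rw [habs] at h1
      obtain ⟨j, hj1, hj2, hj⟩ := (nd_spec k hk1 x x (k + 1)).1
      have hxj : x j ≤ x k := by
        rcases eq_or_lt_of_le hj2 with h | h
        · rw [h]
        · exact le_of_lt (hxmono j k hj1 h (by omega))
      have h2 : x (k + 1) - x k ≤ |x (k + 1) - x j| := by
        rw [abs_of_pos (by linarith : (0:ℝ) < x (k + 1) - x j)]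
        linarith
      rw [← hj] at h2
      linarith
    rw [socialCost, Finset.sum_Icc_succ_top (by omega : 1 ≤ k + 1), hlast,
      Finset.sum_eq_zero hzero, zero_add]
  · -- approximation structure
    intro c hcost
    obtain ⟨g, hg, hnn, hpair, hsingle⟩ := key c
    have hdistinct : ∀ i i', 1 ≤ i → i + 1 ≤ k → i < i' → i' ≤ k + 1 → g i ≠ g i' := by
      intro i i' h1 h2 h3 h4 heq
      have hp := hpair i i' (Finset.mem_Icc.mpr ⟨h1, by omega⟩)
        (Finset.mem_Icc.mpr ⟨by omega, h4⟩) (by omega)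
      have ha := (hg i).2.2
      have hb := (hg i').2.2
      rw [heq] at ha
      have l1 : c (g i') - x i ≤ |x i - c (g i')| := by
        rw [abs_sub_comm]; exact le_abs_self _
      have l2 : x i' - c (g i') ≤ |x i' - c (g i')| := le_abs_self _
      have := hgap i i' h1 h2 h3 h4
      linarith
    have hinj : Set.InjOn g (Set.Icc 1 (k - 1)) := by
      intro a ha b hb heq
      rw [Set.mem_Icc] at ha hb
      by_contra hne
      rcases lt_or_gt_of_ne hne with h | h
      · exact hdistinct a b ha.1 (by omega) h (by omega) heq
      · exact hdistinct b a hb.1 (by omega) h (by omega) heq.symm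
    -- pigeonhole: g k = g (k+1)
    have hgkk1 : g k = g (k + 1) := by
      set G := (Finset.Icc 1 (k - 1)).image g with hG
      have hcardG : G.card = k - 1 := by
        rw [hG, Finset.card_image_of_injOn (by rw [Finset.coe_Icc]; exact hinj),
          Nat.card_Icc]
        omega
      have hGsub : G ⊆ Finset.Icc 1 k := by
        intro t ht
        rw [hG, Finset.mem_image] at ht
        obtain ⟨i, _, rfl⟩ := ht
        exact Finset.mem_Icc.mpr ⟨(hg i).1, (hg i).2.1⟩
      have hknotin : g k ∉ G := by
        intro hmem
        rw [hG, Finset.mem_image] at hmem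
        obtain ⟨i, hi, hieq⟩ := hmem
        rw [Finset.mem_Icc] at hi
        exact hdistinct i k hi.1 (by omega) (by omega) (by omega) hieq
      have hk1notin : g (k + 1) ∉ G := by
        intro hmem
        rw [hG, Finset.mem_image] at hmem
        obtain ⟨i, hi, hieq⟩ := hmem
        rw [Finset.mem_Icc] at hi
        exact hdistinct i (k + 1) hi.1 (by omega) (by omega) (by omega) hieq
      have hm1 : g k ∈ Finset.Icc 1 k \ G :=
        Finset.mem_sdiff.mpr ⟨Finset.mem_Icc.mpr ⟨(hg k).1, (hg k).2.1⟩, hknotin⟩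
      have hm2 : g (k + 1) ∈ Finset.Icc 1 k \ G :=
        Finset.mem_sdiff.mpr ⟨Finset.mem_Icc.mpr ⟨(hg (k+1)).1, (hg (k+1)).2.1⟩, hk1notin⟩
      have hcard1 : (Finset.Icc 1 k \ G).card ≤ 1 := by
        rw [Finset.card_sdiff_of_subset hGsub, hcardG, Nat.card_Icc]
        omega
      exact Finset.card_le_one.mp hcard1 _ hm1 _ hm2
    refine ⟨⟨g k, (hg k).1, (hg k).2.1, ((hg k).2.2).symm, ?_⟩, g, hinj, ?_⟩
    · rw [hgkk1]; exact ((hg (k + 1)).2.2).symm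
    · intro i h1 h2
      refine ⟨(hg i).1, (hg i).2.1, ?_⟩
      rw [← (hg i).2.2]
      exact le_trans (hsingle i (Finset.mem_Icc.mpr ⟨h1, by omega⟩)) hcost
end
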